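/- arXiv:1909.09113 — 3 statements merged into one kernel-verified Lean document; each statement's English description precedes it below -/
import Mathlib

section
/- For any norm N on ℝ², the multiplicative Banach–Mazur distance from (ℝ², N) to (ℝ², ‖·‖₂) is at most √2. That is, there exists an invertible linear map S : ℝ² → ℝ² with ‖S‖·‖S⁻¹‖ ≤ √2, where the operator norms are taken from (ℝ², N) to (ℝ², ‖·‖₂) and back. -/
/-- `N` is a norm on the real vector space `ℝ × ℝ` (i.e. `ℝ²`). -/
structure IsNorm (N : ℝ × ℝ → ℝ) : Prop where
  eq_zero_iff : ∀ v, N v = 0 ↔ v = 0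
  smul : ∀ (c : ℝ) (v : ℝ × ℝ), N (c • v) = |c| * N v
  add_le : ∀ v w, N (v + w) ≤ N v + N w

/-- The Euclidean norm `‖·‖₂` on `ℝ²`. -/
noncomputable def euclNorm : ℝ × ℝ → ℝ := fun v => Real.sqrt (v.1 ^ 2 + v.2 ^ 2)

/-- The operator norm of a linear map `L : (ℝ², M₁) → (ℝ², M₂)`, i.e.
`sup { M₂ (L v) : M₁ v = 1 }`. -/
noncomputable def opNorm (M₁ M₂ : ℝ × ℝ → ℝ) (L : (ℝ × ℝ) →ₗ[ℝ] (ℝ × ℝ)) : ℝ :=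
  sSup {c | ∃ v, M₁ v = 1 ∧ c = M₂ (L v)}

/-!
Among the linear maps `T` sending the Euclidean unit disc into the unit ball `B` of `N`, pick
one maximising `|det T|`, i.e. such that the ellipse `T(disc)` has maximal area inside `B`; it
exists by compactness. Then `N (T v) ≤ ‖v‖₂`, and we claim `‖v‖₂ ≤ √2 · N (T v)`, so that
`S = T⁻¹` satisfies `‖S‖ ≤ √2` and `‖S⁻¹‖ ≤ 1`. Otherwise the unit ball of `N ∘ T` contains the
disc and points `±q` with `‖q‖₂ = r > √2`, hence their convex hull, and that hull contains an
ellipse of area `π r² / (2 √(r² - 1)) > π`, which contradicts maximality.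
-/

open Real

lemma sq_euclNorm (v : ℝ × ℝ) : euclNorm v ^ 2 = v.1 ^ 2 + v.2 ^ 2 :=
  sq_sqrt (by positivity)

lemma euclNorm_nonneg (v : ℝ × ℝ) : 0 ≤ euclNorm v :=
  sqrt_nonneg _

lemma norm_le_euclNorm (v : ℝ × ℝ) : ‖v‖ ≤ euclNorm v := by
  rw [Prod.norm_def, Real.norm_eq_abs, Real.norm_eq_abs]
  exact max_le (abs_le_sqrt (by nlinarith)) (abs_le_sqrt (by nlinarith))

lemma euclNorm_le_two_mul_norm (v : ℝ × ℝ) : euclNorm v ≤ 2 * ‖v‖ := by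
  have h₁ : |v.1| ≤ ‖v‖ := norm_fst_le v
  have h₂ : |v.2| ≤ ‖v‖ := norm_snd_le v
  refine sqrt_le_iff.2 ⟨by positivity, ?_⟩
  nlinarith [abs_nonneg v.1, abs_nonneg v.2, sq_abs v.1, sq_abs v.2]

lemma euclNorm_complexMul (x y : ℝ) (e : ℝ × ℝ) :
    euclNorm (x * e.1 - y * e.2, x * e.2 + y * e.1) = euclNorm (x, y) * euclNorm e := by
  rw [euclNorm, euclNorm, euclNorm, ← sqrt_mul (by positivity)]
  congr 1
  ring

lemma exists_abs_add_euclNorm_le_of_nonneg {r a b s : ℝ} (hr : 2 < r ^ 2) (hr₀ : 0 < r)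
    (ha : 2 * a ^ 2 = r ^ 2) (ha₀ : 0 ≤ a) (hb : 2 * (r ^ 2 - 1) * b ^ 2 = r ^ 2) (hs : 0 ≤ s)
    (t : ℝ) : ∃ l, |l| + euclNorm (a * s - l * r, b * t) ≤ euclNorm (s, t) := by
  set ρ := euclNorm (s, t)
  have hρ : ρ ^ 2 = s ^ 2 + t ^ 2 := sq_euclNorm _
  have hρ₀ : 0 ≤ ρ := euclNorm_nonneg _
  have hr₁ : 0 < r ^ 2 - 1 := by linarith
  by_cases hsmall : r * (a * s) ≤ ρ
  · refine ⟨0, ?_⟩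
    rw [abs_zero, zero_add, zero_mul, sub_zero]
    refine sqrt_le_iff.2 ⟨hρ₀, ?_⟩
    have h₁ : (r * (a * s)) ^ 2 ≤ ρ ^ 2 := pow_le_pow_left₀ (by positivity) hsmall 2
    have hst : (r ^ 2 - 1) * s ^ 2 ≤ t ^ 2 := by nlinarith
    have key : 2 * (r ^ 2 - 1) * (ρ ^ 2 - ((a * s) ^ 2 + (b * t) ^ 2))
        = (r ^ 2 - 2) * (t ^ 2 - (r ^ 2 - 1) * s ^ 2) := by
      linear_combination 2 * (r ^ 2 - 1) * hρ - (r ^ 2 - 1) * s ^ 2 * ha - t ^ 2 * hb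
    have : 0 ≤ ρ ^ 2 - ((a * s) ^ 2 + (b * t) ^ 2) := by
      refine nonneg_of_mul_nonneg_right (a := 2 * (r ^ 2 - 1)) ?_ (by positivity)
      rw [key]; exact mul_nonneg (by linarith) (by linarith)
    exact sub_nonneg.1 this
  · push Not at hsmall
    refine ⟨(r * (a * s) - ρ) / (r ^ 2 - 1), ?_⟩
    have hl : 0 < (r * (a * s) - ρ) / (r ^ 2 - 1) := div_pos (by linarith) hr₁
    rw [abs_of_pos hl, ← le_sub_iff_add_le']
    refine sqrt_le_iff.2 ⟨?_, ?_⟩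
    · have : a * s ≤ r * ρ := by
        have : a ≤ r := by nlinarith
        have : s ≤ ρ := le_sqrt_of_sq_le (by nlinarith)
        nlinarith
      rw [sub_nonneg, div_le_iff₀ hr₁]; nlinarith
    · have key : (ρ - (r * (a * s) - ρ) / (r ^ 2 - 1)) ^ 2
          - ((a * s - (r * (a * s) - ρ) / (r ^ 2 - 1) * r) ^ 2 + (b * t) ^ 2)
          = (r * ρ - 2 * (a * s)) ^ 2 / (2 * (r ^ 2 - 1)) := by
        field_simp
        linear_combination
          (r ^ 4 - r ^ 2) * hρ - (r ^ 2 - 1) * s ^ 2 * ha - (r ^ 2 - 1) * t ^ 2 * hb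
      have : 0 ≤ (r * ρ - 2 * (a * s)) ^ 2 / (2 * (r ^ 2 - 1)) := by positivity
      dsimp only
      linarith

/-- The ellipse with semi-axes `a`, `b`, of area `π a b > π`, lies in the convex hull of the unit
disc and `±(r, 0)`: homogeneously, `(a s, b t) = l • (r, 0) + w` with `|l| + ‖w‖₂ ≤ ‖(s, t)‖₂`. -/
lemma exists_ellipse_subset_convexHull {r : ℝ} (hr : 2 < r ^ 2) (hr₀ : 0 < r) :
    ∃ a b : ℝ, 1 < a * b ∧
      ∀ s t : ℝ, ∃ l, |l| + euclNorm (a * s - l * r, b * t) ≤ euclNorm (s, t) := by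
  have hr₁ : 0 < r ^ 2 - 1 := by linarith
  -- the largest ellipse tangent to the two lines through `(r, 0)` that touch the unit circle
  set a := √(r ^ 2 / 2)
  set b := √(r ^ 2 / (2 * (r ^ 2 - 1)))
  have ha : 2 * a ^ 2 = r ^ 2 := by rw [sq_sqrt (by positivity)]; ring
  have hb : 2 * (r ^ 2 - 1) * b ^ 2 = r ^ 2 := by rw [sq_sqrt (by positivity)]; field_simp
  refine ⟨a, b, ?_, fun s t => ?_⟩
  · have hab : 4 * (r ^ 2 - 1) * (a * b) ^ 2 = r ^ 2 * r ^ 2 := by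
      linear_combination b ^ 2 * (2 * (r ^ 2 - 1)) * ha + r ^ 2 * hb
    have : 1 < (a * b) ^ 2 := by nlinarith [sq_nonneg (r ^ 2 - 2)]
    nlinarith [mul_nonneg (sqrt_nonneg (r ^ 2 / 2)) (sqrt_nonneg (r ^ 2 / (2 * (r ^ 2 - 1))))]
  rcases le_total 0 s with hs | hs
  · exact exists_abs_add_euclNorm_le_of_nonneg hr hr₀ ha (sqrt_nonneg _) hb hs t
  · obtain ⟨l, hl⟩ := exists_abs_add_euclNorm_le_of_nonneg hr hr₀ ha (sqrt_nonneg _) hb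
      (neg_nonneg.2 hs) t
    refine ⟨-l, ?_⟩
    have h₁ : (a * s - -l * r) ^ 2 = (a * -s - l * r) ^ 2 := by ring
    have h₂ : (-s) ^ 2 = s ^ 2 := neg_sq s
    simpa only [euclNorm, abs_neg, h₁, h₂] using hl

lemma exists_one_lt_det_of_sqrt_two_lt (p : Seminorm ℝ (ℝ × ℝ)) (hp : ∀ v, p v ≤ euclNorm v)
    {q : ℝ × ℝ} (hq : p q ≤ 1) (hq₂ : √2 < euclNorm q) :
    ∃ A : (ℝ × ℝ) →L[ℝ] (ℝ × ℝ), 1 < A.det ∧ ∀ v, p (A v) ≤ euclNorm v := by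
  set r := euclNorm q
  have hr₀ : 0 < r := (sqrt_nonneg 2).trans_lt hq₂
  obtain ⟨a, b, hab, hhull⟩ := exists_ellipse_subset_convexHull (lt_sq_of_sqrt_lt hq₂) hr₀
  set e : ℝ × ℝ := r⁻¹ • q
  have he : e.1 ^ 2 + e.2 ^ 2 = 1 := by
    have := sq_euclNorm q
    simp only [e, Prod.smul_fst, Prod.smul_snd, smul_eq_mul]
    field_simp
    linarith
  have he₁ : euclNorm e = 1 := by rw [euclNorm]; simp only [he, sqrt_one]
  have hqe : q = r • e := by simp [e, smul_smul, hr₀.ne']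
  -- the ellipse of `exists_ellipse_subset_convexHull`, rotated so that its `a`-axis is along `q`
  refine ⟨(Matrix.toLin (.finTwoProd ℝ) (.finTwoProd ℝ)
    !![a * e.1, -(b * e.2); a * e.2, b * e.1]).toContinuousLinearMap, ?_, fun v => ?_⟩
  · rw [LinearMap.det_toContinuousLinearMap, LinearMap.det_toLin, Matrix.det_fin_two_of]
    linear_combination hab - a * b * he
  obtain ⟨l, hl⟩ := hhull v.1 v.2
  set x := a * v.1 - l * r
  set y := b * v.2
  have hAv : (Matrix.toLin (.finTwoProd ℝ) (.finTwoProd ℝ)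
      !![a * e.1, -(b * e.2); a * e.2, b * e.1]).toContinuousLinearMap v =
      l • q + (x * e.1 - y * e.2, x * e.2 + y * e.1) := by
    rw [LinearMap.coe_toContinuousLinearMap', Matrix.toLin_finTwoProd_apply, hqe]
    ext <;> simp only [x, y, Prod.fst_add, Prod.snd_add, Prod.smul_fst, Prod.smul_snd,
      smul_eq_mul] <;> ring
  have hlq : p (l • q) ≤ |l| := by
    rw [map_smul_eq_mul, Real.norm_eq_abs]
    exact mul_le_of_le_one_right (abs_nonneg l) hq
  have hrot : p (x * e.1 - y * e.2, x * e.2 + y * e.1) ≤ euclNorm (x, y) := by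
    simpa only [euclNorm_complexMul, he₁, mul_one] using hp (x * e.1 - y * e.2, x * e.2 + y * e.1)
  calc _ ≤ p (l • q) + p (x * e.1 - y * e.2, x * e.2 + y * e.1) := hAv ▸ map_add_le_add p _ _
    _ ≤ |l| + euclNorm (x, y) := add_le_add hlq hrot
    _ ≤ euclNorm v := hl

namespace Seminorm

lemma le_mul_norm_prod (p : Seminorm ℝ (ℝ × ℝ)) (v : ℝ × ℝ) :
    p v ≤ (p (1, 0) + p (0, 1)) * ‖v‖ := by
  have hv : v = v.1 • ((1 : ℝ), (0 : ℝ)) + v.2 • ((0 : ℝ), (1 : ℝ)) := by ext <;> simp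
  calc p v ≤ ‖v.1‖ * p (1, 0) + ‖v.2‖ * p (0, 1) := by
        conv_lhs => rw [hv]
        rw [← map_smul_eq_mul, ← map_smul_eq_mul]
        exact map_add_le_add p _ _
    _ ≤ ‖v‖ * p (1, 0) + ‖v‖ * p (0, 1) :=
        add_le_add (mul_le_mul_of_nonneg_right (norm_fst_le v) (apply_nonneg p _))
          (mul_le_mul_of_nonneg_right (norm_snd_le v) (apply_nonneg p _))
    _ = (p (1, 0) + p (0, 1)) * ‖v‖ := by ring

lemma continuous_prod (p : Seminorm ℝ (ℝ × ℝ)) : Continuous p := by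
  set C := p (1, 0) + p (0, 1)
  have hC : 0 ≤ C := add_nonneg (apply_nonneg p _) (apply_nonneg p _)
  refine (LipschitzWith.of_dist_le_mul (K := ⟨C, hC⟩) fun u v => ?_).continuous
  calc dist (p u) (p v) = |p u - p v| := Real.dist_eq _ _
    _ ≤ p (u - v) := abs_sub_map_le_sub p u v
    _ ≤ C * ‖u - v‖ := p.le_mul_norm_prod _
    _ = C * dist u v := by rw [dist_eq_norm]

end Seminorm

def inscribedMaps (N : ℝ × ℝ → ℝ) : Set ((ℝ × ℝ) →L[ℝ] (ℝ × ℝ)) :=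
  {T | ∀ v, N (T v) ≤ euclNorm v}

namespace IsNorm

variable {N : ℝ × ℝ → ℝ}

def toSeminorm (hN : IsNorm N) : Seminorm ℝ (ℝ × ℝ) :=
  Seminorm.of N hN.add_le fun c v => by rw [hN.smul, Real.norm_eq_abs]

lemma nonneg (hN : IsNorm N) (v : ℝ × ℝ) : 0 ≤ N v :=
  apply_nonneg hN.toSeminorm v

lemma continuous (hN : IsNorm N) : Continuous N :=
  hN.toSeminorm.continuous_prod

lemma exists_pos_mul_norm_le (hN : IsNorm N) : ∃ c > 0, ∀ v, c * ‖v‖ ≤ N v := by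
  obtain ⟨v₀, hv₀, hmin⟩ := (isCompact_sphere (0 : ℝ × ℝ) 1).exists_isMinOn
    (NormedSpace.sphere_nonempty.2 zero_le_one) hN.continuous.continuousOn
  have hv₀ : ‖v₀‖ = 1 := by simpa using hv₀
  have hv₀ne : v₀ ≠ 0 := by rintro rfl; simp at hv₀
  refine ⟨N v₀, (hN.nonneg v₀).lt_of_ne fun h => hv₀ne ((hN.eq_zero_iff v₀).1 h.symm), fun v => ?_⟩
  rcases eq_or_ne v 0 with rfl | hv
  · simpa using hN.nonneg 0
  have hnorm : 0 < ‖v‖ := norm_pos_iff.2 hv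
  have hunit : ‖v‖⁻¹ • v ∈ Metric.sphere (0 : ℝ × ℝ) 1 := by
    simp [norm_smul, hnorm.ne']
  calc N v₀ * ‖v‖ ≤ N (‖v‖⁻¹ • v) * ‖v‖ := by gcongr; exact hmin hunit
    _ = N v := by rw [hN.smul, abs_of_pos (inv_pos.2 hnorm)]; field_simp

lemma isCompact_inscribedMaps (hN : IsNorm N) : IsCompact (inscribedMaps N) := by
  obtain ⟨c, hc, hcN⟩ := hN.exists_pos_mul_norm_le
  refine Metric.isCompact_of_isClosed_isBounded ?_ ?_
  · rw [inscribedMaps, Set.ofPred_forall]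
    exact isClosed_iInter fun v =>
      isClosed_le (hN.continuous.comp (continuous_eval_const v)) continuous_const
  · refine (Metric.isBounded_closedBall (x := 0) (r := 2 / c)).subset fun T hT => ?_
    rw [mem_closedBall_zero_iff]
    refine T.opNorm_le_bound (by positivity) fun v => ?_
    rw [div_mul_eq_mul_div, le_div_iff₀ hc]
    linarith [hcN (T v), hT v, euclNorm_le_two_mul_norm v]

lemma exists_smul_id_mem_inscribedMaps (hN : IsNorm N) :
    ∃ δ : ℝ, 0 < δ ∧ δ • ContinuousLinearMap.id ℝ (ℝ × ℝ) ∈ inscribedMaps N := by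
  set C := N (1, 0) + N (0, 1)
  have hC : 0 ≤ C := add_nonneg (hN.nonneg _) (hN.nonneg _)
  refine ⟨(C + 1)⁻¹, by positivity, fun v => ?_⟩
  rw [FunLike.coe_smul, Pi.smul_apply, ContinuousLinearMap.id_apply, hN.smul,
    abs_of_pos (by positivity), inv_mul_le_iff₀ (by positivity)]
  calc N v ≤ C * ‖v‖ := hN.toSeminorm.le_mul_norm_prod v
    _ ≤ (C + 1) * euclNorm v := by
        gcongr
        · linarith
        · exact norm_le_euclNorm v

lemma exists_max_abs_det (hN : IsNorm N) :
    ∃ T ∈ inscribedMaps N, T.det ≠ 0 ∧ ∀ T' ∈ inscribedMaps N, |T'.det| ≤ |T.det| := by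
  obtain ⟨δ, hδ, hδK⟩ := hN.exists_smul_id_mem_inscribedMaps
  obtain ⟨T, hTK, hTmax⟩ := hN.isCompact_inscribedMaps.exists_isMaxOn ⟨_, hδK⟩
    (continuous_abs.comp ContinuousLinearMap.continuous_det).continuousOn
  refine ⟨T, hTK, fun hT => ?_, hTmax⟩
  have hδdet : |(δ • ContinuousLinearMap.id ℝ (ℝ × ℝ)).det| ≤ |T.det| := hTmax hδK
  simp only [ContinuousLinearMap.det, ContinuousLinearMap.toLinearMap_smul, LinearMap.det_smul,
    ContinuousLinearMap.coe_id, LinearMap.det_id] at hδdet hT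
  rw [hT, abs_zero] at hδdet
  have : 0 < |δ ^ Module.finrank ℝ (ℝ × ℝ) * 1| := by positivity
  linarith

lemma euclNorm_le_sqrt_two_of_max (hN : IsNorm N)
    {T : (ℝ × ℝ) →L[ℝ] (ℝ × ℝ)} (hT : T ∈ inscribedMaps N) (hdet : T.det ≠ 0)
    (hmax : ∀ T' ∈ inscribedMaps N, |T'.det| ≤ |T.det|) {q : ℝ × ℝ} (hq : N (T q) ≤ 1) :
    euclNorm q ≤ √2 := by
  by_contra! hq₂
  obtain ⟨A, hA, hTA⟩ := exists_one_lt_det_of_sqrt_two_lt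
    (hN.toSeminorm.comp (T : (ℝ × ℝ) →ₗ[ℝ] (ℝ × ℝ))) hT hq hq₂
  have hle : |(T.comp A).det| ≤ |T.det| := hmax _ hTA
  rw [ContinuousLinearMap.det, ContinuousLinearMap.toLinearMap_comp, LinearMap.det_comp, abs_mul,
    abs_of_pos (one_pos.trans hA)] at hle
  have : 0 < |T.det| := abs_pos.2 hdet
  nlinarith

end IsNorm

lemma opNorm_nonneg {M₁ M₂ : ℝ × ℝ → ℝ} (L : (ℝ × ℝ) →ₗ[ℝ] (ℝ × ℝ)) (h : ∀ v, 0 ≤ M₂ v) :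
    0 ≤ opNorm M₁ M₂ L :=
  Real.sSup_nonneg <| by rintro _ ⟨v, -, rfl⟩; exact h _

lemma opNorm_le {M₁ M₂ : ℝ × ℝ → ℝ} {L : (ℝ × ℝ) →ₗ[ℝ] (ℝ × ℝ)} {C : ℝ} (hC : 0 ≤ C)
    (h : ∀ v, M₁ v = 1 → M₂ (L v) ≤ C) : opNorm M₁ M₂ L ≤ C :=
  Real.sSup_le (by rintro _ ⟨v, hv, rfl⟩; exact h v hv) hC

/-- John's theorem in dimension two: for any norm `N` on `ℝ²`, there is an invertible linear
map `S : (ℝ², N) → (ℝ², ‖·‖₂)` with `‖S‖ ⬝ ‖S⁻¹‖ ≤ √2`; in particular the Banach–Mazur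
distance from `(ℝ², N)` to `(ℝ², ‖·‖₂)` is at most `√2`. -/
theorem stmt2 (N : ℝ × ℝ → ℝ) (hN : IsNorm N) :
    ∃ S : (ℝ × ℝ) ≃ₗ[ℝ] (ℝ × ℝ),
      opNorm N euclNorm S.toLinearMap * opNorm euclNorm N S.symm.toLinearMap ≤
        Real.sqrt 2 := by
  obtain ⟨T, hT, hdet, hmax⟩ := hN.exists_max_abs_det
  let E := (T : (ℝ × ℝ) →ₗ[ℝ] (ℝ × ℝ)).equivOfDetNeZero hdet
  refine ⟨E.symm, ?_⟩
  have hS : opNorm N euclNorm E.symm.toLinearMap ≤ √2 :=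
    opNorm_le (sqrt_nonneg 2) fun v hv =>
      hN.euclNorm_le_sqrt_two_of_max hT hdet hmax (congrArg N (E.apply_symm_apply v) |>.trans hv).le
  have hSinv : opNorm euclNorm N E.symm.symm.toLinearMap ≤ 1 :=
    opNorm_le zero_le_one fun v hv => hv ▸ hT v
  calc _ ≤ √2 * 1 := mul_le_mul hS hSinv (opNorm_nonneg _ hN.nonneg) (sqrt_nonneg 2)
    _ = √2 := mul_one _
end

section
/- The map from the open Euclidean unit disk 𝔻 ⊂ ℂ to itself given by z ↦ 2·conj(z) / (2 − |z|² + |z|⁴) is a well-defined bijection (in fact a diffeomorphism) of 𝔻 onto itself. -/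
open Complex

/-- The open Euclidean unit disk in `ℂ`. -/
def unitDisk : Set ℂ := {z : ℂ | ‖z‖ < 1}

/-- The map `z ↦ 2·conj(z) / (2 − |z|² + |z|⁴)`. -/
noncomputable def diskMap : ℂ → ℂ := fun z =>
  (2 * (starRingEnd ℂ) z) / ((2 - ‖z‖ ^ 2 + ‖z‖ ^ 4 : ℝ) : ℂ)

lemma dpos (r : ℝ) : 0 < 2 - r ^ 2 + r ^ 4 := by
  nlinarith [sq_nonneg (r ^ 2 - 1/2)]

lemma abs_diskMap (z : ℂ) :
    ‖diskMap z‖ =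
      2 * ‖z‖ / (2 - ‖z‖ ^ 2 + ‖z‖ ^ 4) := by
  unfold diskMap
  rw [norm_div, norm_mul, Complex.norm_conj, Complex.norm_real, Real.norm_eq_abs,
    abs_of_pos (dpos _)]
  norm_num

lemma fmono {a b : ℝ} (ha : 0 ≤ a) (hab : a < b) (hb : b ≤ 1) :
    2 * a / (2 - a ^ 2 + a ^ 4) < 2 * b / (2 - b ^ 2 + b ^ 4) := by
  rw [div_lt_div_iff₀ (dpos a) (dpos b)]
  have hb0 : 0 ≤ b := ha.trans hab.le
  have hab1 : a * b < 1 := by nlinarith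
  have h2 : a * b * (a ^ 2 + a * b + b ^ 2) < 2 + a * b := by
    nlinarith [mul_nonneg ha hb0, sq_nonneg (a - b), sq_nonneg (a + b)]
  nlinarith [mul_pos (sub_pos.mpr hab)
    (by linarith : (0:ℝ) < 2 + a * b - a * b * (a ^ 2 + a * b + b ^ 2))]

/-- The map `z ↦ 2·conj(z)/(2 − |z|² + |z|⁴)` is a well-defined bijection (indeed a
diffeomorphism) of the open unit disk `𝔻` onto itself. -/
theorem stmt5 : Set.BijOn diskMap unitDisk unitDisk ∧ ContDiffOn ℝ (⊤ : ℕ∞) diskMap unitDisk := by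
  constructor
  · refine ⟨?_, ?_, ?_⟩
    · -- maps to
      intro z hz
      have hz1 : ‖z‖ < 1 := hz
      have h0 : 0 ≤ ‖z‖ := norm_nonneg z
      show ‖diskMap z‖ < 1
      rw [abs_diskMap, div_lt_one (dpos _)]
      nlinarith [sq_nonneg (‖z‖ - 1)]
    · -- injective
      intro z hz w hw h
      have hz1 : ‖z‖ < 1 := hz
      have hw1 : ‖w‖ < 1 := hw
      have habs : ‖z‖ = ‖w‖ := by
        have h' := congrArg norm h
        rw [abs_diskMap, abs_diskMap] at h'
        by_contra hne
        rcases lt_or_gt_of_ne hne with hlt | hlt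
        · exact absurd h' (ne_of_lt (fmono (norm_nonneg z) hlt hw1.le))
        · exact absurd h'.symm (ne_of_lt (fmono (norm_nonneg w) hlt hz1.le))
      unfold diskMap at h
      rw [habs] at h
      have hd : ((2 - ‖w‖ ^ 2 + ‖w‖ ^ 4 : ℝ) : ℂ) ≠ 0 := by
        exact_mod_cast (dpos (‖w‖)).ne'
      rw [div_eq_div_iff hd hd] at h
      have h2 := mul_right_cancel₀ hd h
      have h3 := mul_left_cancel₀ (by norm_num : (2:ℂ) ≠ 0) h2
      exact star_injective h3
    · -- surjective
      intro w hw
      have hw1 : ‖w‖ < 1 := hw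
      have hw0 : 0 ≤ ‖w‖ := norm_nonneg w
      set s := ‖w‖ with hs
      have hcont : ContinuousOn (fun r : ℝ => 2 * r - s * (2 - r ^ 2 + r ^ 4)) (Set.Icc 0 1) := by
        fun_prop
      have hivt := intermediate_value_Icc (by norm_num : (0:ℝ) ≤ 1) hcont
      have h0mem : (0 : ℝ) ∈ Set.Icc (2 * 0 - s * (2 - 0 ^ 2 + 0 ^ 4))
          (2 * 1 - s * (2 - 1 ^ 2 + 1 ^ 4)) := by
        constructor <;> nlinarith
      obtain ⟨r, hrmem, hr⟩ := hivt h0mem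
      have hr0 : 0 ≤ r := hrmem.1
      have hreq : 2 * r = s * (2 - r ^ 2 + r ^ 4) := by linear_combination hr
      have hr1 : r < 1 := by
        rcases lt_or_eq_of_le hrmem.2 with h | h
        · exact h
        · exfalso; rw [h] at hreq; nlinarith
      have hd : ((2 - r ^ 2 + r ^ 4 : ℝ) : ℂ) ≠ 0 := by
        exact_mod_cast (dpos r).ne'
      refine ⟨(starRingEnd ℂ) w * (((2 - r ^ 2 + r ^ 4) / 2 : ℝ) : ℂ), ?_, ?_⟩
      · show ‖_‖ < 1
        rw [norm_mul, Complex.norm_conj, Complex.norm_real, Real.norm_eq_abs,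
          abs_of_pos (by linarith [dpos r])]
        calc s * ((2 - r ^ 2 + r ^ 4) / 2) = r := by linarith
        _ < 1 := hr1
      · have hzabs : ‖(starRingEnd ℂ) w * (((2 - r ^ 2 + r ^ 4) / 2 : ℝ) : ℂ)‖ = r := by
          rw [norm_mul, Complex.norm_conj, Complex.norm_real, Real.norm_eq_abs,
            abs_of_pos (by linarith [dpos r])]
          linarith
        unfold diskMap
        rw [hzabs, map_mul, Complex.conj_conj, Complex.conj_ofReal, div_eq_iff hd]
        push_cast
        ring
  · -- smoothness
    apply ContDiff.contDiffOn
    have heq : diskMap = fun z : ℂ =>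
        (2 * (starRingEnd ℂ) z) *
          ((((2 - (z.re ^ 2 + z.im ^ 2) + (z.re ^ 2 + z.im ^ 2) ^ 2 : ℝ)) : ℂ))⁻¹ := by
      funext z
      have h2 : ‖z‖ ^ 2 = z.re ^ 2 + z.im ^ 2 := by
        rw [Complex.sq_norm, Complex.normSq_apply]; ring
      have h4 : ‖z‖ ^ 4 = (z.re ^ 2 + z.im ^ 2) ^ 2 := by
        rw [show ‖z‖ ^ 4 = (‖z‖ ^ 2) ^ 2 from by ring, h2]
      unfold diskMap
      rw [h2, h4, div_eq_mul_inv]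
    rw [heq]
    have hden : ContDiff ℝ (⊤ : ℕ∞) fun z : ℂ =>
        (((2 - (z.re ^ 2 + z.im ^ 2) + (z.re ^ 2 + z.im ^ 2) ^ 2 : ℝ)) : ℂ) := by
      apply Complex.ofRealCLM.contDiff.comp
      apply ContDiff.add
      · exact ContDiff.sub contDiff_const
          ((Complex.reCLM.contDiff.pow 2).add (Complex.imCLM.contDiff.pow 2))
      · exact ((Complex.reCLM.contDiff.pow 2).add (Complex.imCLM.contDiff.pow 2)).pow 2
    refine ContDiff.mul ?_ (hden.inv ?_)
    · exact contDiff_const.mul (Complex.conjCLE : ℂ ≃L[ℝ] ℂ).contDiff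
    · intro z
      have h : (0:ℝ) < 2 - (z.re ^ 2 + z.im ^ 2) + (z.re ^ 2 + z.im ^ 2) ^ 2 := by
        nlinarith [sq_nonneg (z.re ^ 2 + z.im ^ 2 - 1/2)]
      exact_mod_cast h.ne'
end

section
/- Let σ be an orientation-reversing Möbius involution of the Riemann sphere ℂ ∪ {∞} with no fixed points, written σ(z) = (A·conj(z) + B)/(C·conj(z) + D) with AD − BC = 1. Then B ≠ 0, C ≠ 0, the quantity B/C is a nonzero real number, C is a nonzero real number, and with L(z) = C⁻¹ z + A/C the conjugated map L⁻¹ ∘ σ ∘ L equals the antipodal map z ↦ −1/conj(z). -/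
/-!
Write `M = [[A, B], [C, D]]` and `M̄` for its entrywise conjugate. Composing `σ` with itself gives
the Möbius map of `M M̄`; evaluating `σ ∘ σ = id` at `∞` and at two finite points shows
`M M̄ = μ I`, hence `M̄ = μ M⁻¹`, and conjugating `det M = 1` gives `μ² = 1`. The map `σ` cannot
fix `∞`, so `C ≠ 0`. If `μ = 1`, then `σ` fixes the point `(A + i) / C`. If `μ = -1`, then `B`
and `C` are real, `D = -conj A` and `BC = -(|A|² + 1)`, and the change of variable
`L z = (z + A) / C` turns `σ` into `z ↦ -1 / conj z`.
-/

open OnePoint Complex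

/-- The anti-Möbius transformation `z ↦ (A·conj z + B)/(C·conj z + D)` of the Riemann
sphere `ℂ ∪ {∞}`. -/
noncomputable def antiMoebius (A B C D : ℂ) : OnePoint ℂ → OnePoint ℂ :=
  OnePoint.rec (if C = 0 then ∞ else ((A / C : ℂ) : OnePoint ℂ))
    (fun z => if C * (starRingEnd ℂ) z + D = 0 then ∞
      else (((A * (starRingEnd ℂ) z + B) / (C * (starRingEnd ℂ) z + D) : ℂ) : OnePoint ℂ))

/-- The affine map `z ↦ a·z + b` of the Riemann sphere, fixing `∞`. -/
def affineSphere (a b : ℂ) : OnePoint ℂ → OnePoint ℂ :=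
  OnePoint.rec ∞ (fun z => ((a * z + b : ℂ) : OnePoint ℂ))

/-- The antipodal map `z ↦ -1/conj z` of the Riemann sphere. -/
noncomputable def antipodal : OnePoint ℂ → OnePoint ℂ :=
  OnePoint.rec ((0 : ℂ) : OnePoint ℂ)
    (fun z => if z = 0 then ∞ else (((-1) / (starRingEnd ℂ) z : ℂ) : OnePoint ℂ))

open ComplexConjugate

variable {A B C D : ℂ}

@[simp]
lemma antiMoebius_coe (z : ℂ) : antiMoebius A B C D z =
    if C * conj z + D = 0 then ∞ else (((A * conj z + B) / (C * conj z + D) : ℂ) : OnePoint ℂ) :=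
  rfl

@[simp]
lemma antiMoebius_infty :
    antiMoebius A B C D ∞ = if C = 0 then ∞ else ((A / C : ℂ) : OnePoint ℂ) :=
  rfl

@[simp]
lemma affineSphere_coe (a b z : ℂ) : affineSphere a b z = ((a * z + b : ℂ) : OnePoint ℂ) := rfl

@[simp]
lemma affineSphere_infty (a b : ℂ) : affineSphere a b ∞ = ∞ := rfl

@[simp]
lemma antipodal_coe (z : ℂ) :
    antipodal z = if z = 0 then ∞ else ((-1 / conj z : ℂ) : OnePoint ℂ) :=
  rfl

@[simp]
lemma antipodal_infty : antipodal ∞ = ((0 : ℂ) : OnePoint ℂ) := rfl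

lemma antiMoebius_coe_of_ne (z : ℂ) (hz : C * conj z + D ≠ 0) :
    antiMoebius A B C D z = (((A * conj z + B) / (C * conj z + D) : ℂ) : OnePoint ℂ) :=
  if_neg hz

lemma antiMoebius_infty_of_ne (hC : C ≠ 0) :
    antiMoebius A B C D ∞ = ((A / C : ℂ) : OnePoint ℂ) :=
  if_neg hC

lemma mul_conj_add_mul_conj_eq_zero_of_antiMoebius_antiMoebius_infty (hC : C ≠ 0)
    (hinv : antiMoebius A B C D (antiMoebius A B C D ∞) = ∞) :
    C * conj A + D * conj C = 0 := by
  by_contra h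
  have hden : C * conj (A / C) + D ≠ 0 := by
    have hC' : conj C ≠ 0 := (map_ne_zero _).mpr hC
    rw [map_div₀]
    intro h'
    field_simp at h'
    exact h (by linear_combination h')
  rw [antiMoebius_infty_of_ne hC, antiMoebius_coe_of_ne _ hden] at hinv
  exact coe_ne_infty _ hinv

/-- The entries of `M M̄` are the coefficients of this identity, which is `σ (σ z) = z` with
denominators cleared. -/
lemma coeff_identity_of_antiMoebius_antiMoebius_eq (z : ℂ) (hz : C * conj z + D ≠ 0)
    (hinv : antiMoebius A B C D (antiMoebius A B C D z) = z) :
    (A * conj A + B * conj C) * z + (A * conj B + B * conj D) =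
      z * ((C * conj A + D * conj C) * z + (C * conj B + D * conj D)) := by
  rw [antiMoebius_coe_of_ne z hz] at hinv
  set w := (A * conj z + B) / (C * conj z + D)
  have hz' : conj C * z + conj D ≠ 0 :=
    fun h => hz (by simpa using congrArg conj h)
  have hw : conj w * (conj C * z + conj D) = conj A * z + conj B := by
    simp only [w, map_div₀, map_add, map_mul, conj_conj]
    exact div_mul_cancel₀ _ hz'
  by_cases hw' : C * conj w + D = 0
  · rw [antiMoebius_coe, if_pos hw'] at hinv
    exact absurd hinv.symm (coe_ne_infty z)
  · rw [antiMoebius_coe_of_ne w hw', coe_eq_coe, div_eq_iff hw'] at hinv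
    linear_combination (conj C * z + conj D) * hinv - (A - z * C) * hw

lemma mul_conj_scalar_of_antiMoebius_involutive (hC : C ≠ 0)
    (hinv : ∀ z, antiMoebius A B C D (antiMoebius A B C D z) = z) :
    C * conj A + D * conj C = 0 ∧ A * conj B + B * conj D = 0 ∧
      A * conj A + B * conj C = C * conj B + D * conj D := by
  have h21 := mul_conj_add_mul_conj_eq_zero_of_antiMoebius_antiMoebius_infty hC (hinv ∞)
  set z₀ := conj (-D / C)
  -- The identity is affine in `z` once `h21` kills the quadratic term, and it holds off `z₀`.
  have hlin : ∀ t : ℂ, t ≠ 0 → (A * conj A + B * conj C - (C * conj B + D * conj D)) * (z₀ + t) +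
      (A * conj B + B * conj D) = 0 := by
    intro t ht
    have hden : C * conj (z₀ + t) + D = C * conj t := by
      simp only [z₀, map_add, conj_conj]
      field_simp
      ring
    have hz : C * conj (z₀ + t) + D ≠ 0 := by
      rw [hden]
      exact mul_ne_zero hC ((map_ne_zero _).mpr ht)
    linear_combination coeff_identity_of_antiMoebius_antiMoebius_eq _ hz (hinv _) +
      (z₀ + t) ^ 2 * h21
  have h1 := hlin 1 one_ne_zero
  have h2 := hlin 2 two_ne_zero
  refine ⟨h21, by linear_combination h1 - (z₀ + 1) * (h2 - h1), by linear_combination h2 - h1⟩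

lemma sq_eq_one_and_conj_eq_of_mul_conj_eq_smul (hdet : A * D - B * C = 1) {μ : ℂ}
    (h11 : A * conj A + B * conj C = μ) (h12 : A * conj B + B * conj D = 0)
    (h21 : C * conj A + D * conj C = 0) (h22 : C * conj B + D * conj D = μ) :
    μ ^ 2 = 1 ∧ conj A = μ * D ∧ conj B = -(μ * B) ∧ conj C = -(μ * C) ∧ conj D = μ * A := by
  have hA : conj A = μ * D := by linear_combination (-conj A) * hdet + D * h11 - B * h21
  have hB : conj B = -(μ * B) := by linear_combination (-conj B) * hdet + D * h12 - B * h22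
  have hC : conj C = -(μ * C) := by linear_combination (-conj C) * hdet - C * h11 + A * h21
  have hD : conj D = μ * A := by linear_combination (-conj D) * hdet - C * h12 + A * h22
  have hdet' : conj A * conj D - conj B * conj C = 1 := by simpa using congrArg conj hdet
  refine ⟨?_, hA, hB, hC, hD⟩
  rw [hA, hB, hC, hD] at hdet'
  linear_combination hdet' - μ ^ 2 * hdet

/-- In the coordinate `L z = (z + A) / C` this map is `z ↦ 1 / conj z`, which fixes the unit
circle; the witness is `L I`. -/
lemma antiMoebius_add_I_div_eq_self (hC : C ≠ 0) (hdet : A * D - B * C = 1) (hA : conj A = D)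
    (hCc : conj C = -C) :
    antiMoebius A B C D ((A + I) / C : ℂ) = ((A + I) / C : ℂ) := by
  have hden : C * conj ((A + I) / C) + D = I := by
    rw [map_div₀, map_add, conj_I, hA, hCc]
    field_simp
    ring
  rw [antiMoebius_coe_of_ne _ (by rw [hden]; exact I_ne_zero), coe_eq_coe, hden,
    div_eq_iff I_ne_zero, map_div₀, map_add, conj_I, hA, hCc]
  field_simp
  linear_combination -hdet - I_sq

lemma affineSphere_antiMoebius_affineSphere_eq_antipodal (hC : C ≠ 0) (hdet : A * D - B * C = 1)
    (hA : conj A = -D) (hCc : conj C = C) (z : OnePoint ℂ) :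
    affineSphere C (-A) (antiMoebius A B C D (affineSphere C⁻¹ (A / C) z)) = antipodal z := by
  induction z using OnePoint.rec with
  | infty =>
    rw [affineSphere_infty, antiMoebius_infty_of_ne hC, affineSphere_coe, antipodal_infty,
      coe_eq_coe]
    field_simp
    ring
  | coe w =>
    have hden : C * conj (C⁻¹ * w + A / C) + D = conj w := by
      rw [map_add, map_mul, map_inv₀, map_div₀, hCc, hA]
      field_simp
      ring
    rw [affineSphere_coe, antiMoebius_coe, hden, antipodal_coe]
    by_cases hw : w = 0
    · simp [hw]
    · have hw' : conj w ≠ 0 := (map_ne_zero _).mpr hw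
      rw [if_neg hw', if_neg hw, affineSphere_coe, coe_eq_coe, map_add, map_mul, map_inv₀,
        map_div₀, hCc, hA]
      field_simp
      linear_combination -hdet

/-- If `σ(z) = (A·conj z + B)/(C·conj z + D)`, with `AD − BC = 1`, is an orientation-reversing
Möbius involution of the Riemann sphere without fixed points, then `B ≠ 0`, `C ≠ 0`, `B/C` is
a nonzero real number, `C` is a nonzero real number, and conjugating `σ` by the linear map
`L(z) = C⁻¹·z + A/C` yields the antipodal map `z ↦ −1/conj z`. -/
theorem stmt6 (A B C D : ℂ) (hdet : A * D - B * C = 1)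
    (hinv : ∀ z, antiMoebius A B C D (antiMoebius A B C D z) = z)
    (hfree : ∀ z, antiMoebius A B C D z ≠ z) :
    B ≠ 0 ∧ C ≠ 0 ∧ (B / C).im = 0 ∧ C.im = 0 ∧
      ∀ z, affineSphere C (-A) (antiMoebius A B C D (affineSphere C⁻¹ (A / C) z)) =
        antipodal z := by
  have hC : C ≠ 0 := fun h => hfree ∞ (by simp [h])
  obtain ⟨h21, h12, h22⟩ := mul_conj_scalar_of_antiMoebius_involutive hC hinv
  generalize hμ : A * conj A + B * conj C = μ at h22
  obtain ⟨hμ2, hA, hB, hCc, -⟩ := sq_eq_one_and_conj_eq_of_mul_conj_eq_smul hdet hμ h12 h21 h22.symm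
  rcases sq_eq_one_iff.mp hμ2 with rfl | rfl
  · rw [one_mul] at hA hCc
    exact absurd (antiMoebius_add_I_div_eq_self hC hdet hA hCc) (hfree _)
  simp only [neg_one_mul, neg_neg] at hA hB hCc
  have hBC : B * C = -(normSq A + 1 : ℝ) := by
    push_cast
    rw [← mul_conj, hA]
    linear_combination -hdet
  have hB0 : B ≠ 0 := left_ne_zero_of_mul <| by
    have hpos : 0 < normSq A + 1 := add_pos_of_nonneg_of_pos (normSq_nonneg A) one_pos
    rw [hBC]
    exact neg_ne_zero.mpr (ofReal_ne_zero.mpr hpos.ne')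
  refine ⟨hB0, hC, ?_, conj_eq_iff_im.mp hCc,
    affineSphere_antiMoebius_affineSphere_eq_antipodal hC hdet hA hCc⟩
  exact conj_eq_iff_im.mp (by rw [map_div₀, hB, hCc])
end
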